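/- For each fixed η ≥ 0 and each fixed k ≥ 0, the values ζ(η, ω, k) for 0 ≤ ω ≤ min{η, k} sum to 1: Σ_{ω=0}^{min(η,k)} ζ(η,ω,k) = 1, where ζ(η,ω,k) = S(ω, k−ω)·2^{−(k−ω)(η−ω)}·∏_{i=1}^{ω}(1 − 2^{−(η+1−i)}). -/

import Mathlib

/-- `S ω l` = sum over all nondecreasing tuples `0 ≤ i₁ ≤ ⋯ ≤ i_l ≤ ω`
of `2^{-(i₁+⋯+i_l)}`, with `S ω 0 = 1`. -/
noncomputable def S (ω l : ℕ) : ℝ := by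
  classical
  exact ∑ f ∈ Finset.univ.filter (fun f : Fin l → Fin (ω + 1) => Monotone f),
    (1 / 2 : ℝ) ^ (∑ i, (f i : ℕ))

/-- The conditional Kovalenko rank distribution value. -/
noncomputable def zeta (η ω k : ℕ) : ℝ :=
  S ω (k - ω) * (1 / 2 : ℝ) ^ ((k - ω) * (η - ω)) *
    ∏ i ∈ Finset.Icc 1 ω, (1 - (1 / 2 : ℝ) ^ (η + 1 - i))

/-!
Appending one uniform row to a matrix whose rank deficiency has already dropped by `ω` lowers it
once more with probability `1 - 2^{-(η-ω)}`. Algebraically: splitting the tuples counted by `S` on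
whether `i₁ = 0` gives `S(ω+1, l+1) = S(ω+1, l) + 2^{-(l+1)} S(ω, l+1)`, hence
`ζ(η, ω+1, k+1) = 2^{-(η-ω-1)} ζ(η, ω+1, k) + (1 - 2^{-(η-ω)}) ζ(η, ω, k)`.
A step of this pure-birth form, absorbing at `ω = η`, preserves the total mass, so the claim
follows by induction on `k` from `ζ(η, 0, 0) = 1`.
-/

open Finset

lemma Fin.monotone_cons_iff {α : Type*} [Preorder α] {n : ℕ} {f : Fin n → α} {a : α} :
    Monotone (Fin.cons a f : Fin (n + 1) → α) ↔ (∀ i, a ≤ f i) ∧ Monotone f := by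
  rw [monotone_iff_forall_lt, monotone_iff_forall_lt]
  exact Fin.liftFun_cons _

section MonotoneTuples

open Classical

variable {M : Type*} [AddCommMonoid M] {l m : ℕ}

lemma sum_monotone_of_head_eq_zero (F : (Fin (l + 1) → Fin (m + 1)) → M) :
    ∑ f ∈ univ.filter (fun f => Monotone f ∧ f 0 = 0), F f =
      ∑ g ∈ univ.filter (fun g : Fin l → Fin (m + 1) => Monotone g), F (Fin.cons 0 g) := by
  refine sum_nbij' Fin.tail (fun g => Fin.cons 0 g) ?_ ?_ ?_ ?_ ?_
  · intro f hf
    simp only [mem_filter, mem_univ, true_and] at hf ⊢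
    exact hf.1.comp Fin.strictMono_succ.monotone
  · intro g hg
    simp only [mem_filter, mem_univ, true_and] at hg ⊢
    exact ⟨Fin.monotone_cons_iff.2 ⟨fun _ => Fin.zero_le _, hg⟩, rfl⟩
  · intro f hf
    simp only [mem_filter, mem_univ, true_and] at hf
    rw [← hf.2, Fin.cons_self_tail]
  · intro g _
    exact Fin.tail_cons _ _
  · intro f hf
    simp only [mem_filter, mem_univ, true_and] at hf
    rw [← hf.2, Fin.cons_self_tail]

lemma sum_monotone_of_head_ne_zero (F : (Fin (l + 1) → Fin (m + 2)) → M) :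
    ∑ f ∈ univ.filter (fun f => Monotone f ∧ ¬ f 0 = 0), F f =
      ∑ g ∈ univ.filter (fun g : Fin (l + 1) → Fin (m + 1) => Monotone g), F (Fin.succ ∘ g) := by
  have succ_predAbove : ∀ f ∈ univ.filter (fun f : Fin (l + 1) → Fin (m + 2) =>
      Monotone f ∧ ¬ f 0 = 0), Fin.succ ∘ Fin.predAbove 0 ∘ f = f := by
    intro f hf
    simp only [mem_filter, mem_univ, true_and] at hf
    funext i
    exact Fin.succ_predAbove_zero fun hi => hf.2 (Fin.le_zero_iff.1 (hi ▸ hf.1 (Fin.zero_le i)))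
  refine sum_nbij' (Fin.predAbove 0 ∘ ·) (Fin.succ ∘ ·) ?_ ?_ succ_predAbove ?_ ?_
  · intro f hf
    simp only [mem_filter, mem_univ, true_and] at hf ⊢
    exact (Fin.predAbove_right_monotone 0).comp hf.1
  · intro g hg
    simp only [mem_filter, mem_univ, true_and] at hg ⊢
    exact ⟨Fin.strictMono_succ.monotone.comp hg, Fin.succ_ne_zero _⟩
  · intro g _
    funext i
    exact Fin.predAbove_zero_succ
  · intro f hf
    exact congrArg F (succ_predAbove f hf).symm

end MonotoneTuples

theorem sum_range_eq_of_pure_birth_step {R : Type*} [CommRing R] {n : ℕ} {p q a : ℕ → R}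
    (h0 : q 0 = a 0 * p 0) (hsucc : ∀ ω < n, q (ω + 1) = a (ω + 1) * p (ω + 1) + (1 - a ω) * p ω)
    (hn : a n = 1) :
    ∑ ω ∈ range (n + 1), q ω = ∑ ω ∈ range (n + 1), p ω := by
  calc ∑ ω ∈ range (n + 1), q ω
      = ∑ ω ∈ range n, (a (ω + 1) * p (ω + 1) + (1 - a ω) * p ω) + a 0 * p 0 := by
        rw [sum_range_succ', h0, sum_congr rfl fun ω hω => hsucc ω (mem_range.1 hω)]
    _ = ∑ ω ∈ range (n + 1), a ω * p ω + ∑ ω ∈ range (n + 1), (1 - a ω) * p ω := by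
        rw [sum_add_distrib, sum_range_succ' (fun ω => a ω * p ω), sum_range_succ _ n, hn]
        ring
    _ = ∑ ω ∈ range (n + 1), p ω := by
        rw [← sum_add_distrib]
        exact sum_congr rfl fun ω _ => by ring

lemma S_succ_succ (ω l : ℕ) :
    S (ω + 1) (l + 1) = S (ω + 1) l + (1 / 2 : ℝ) ^ (l + 1) * S ω (l + 1) := by
  classical
  unfold S
  rw [← sum_filter_add_sum_filter_not _ (fun f => f 0 = 0), filter_filter, filter_filter,
    sum_monotone_of_head_eq_zero, sum_monotone_of_head_ne_zero, mul_sum]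
  congr 1
  · simp only [Fin.sum_univ_succ, Fin.cons_zero, Fin.cons_succ, Fin.val_zero, zero_add]
  · refine sum_congr rfl fun g _ => ?_
    simp only [Function.comp_apply, Fin.val_succ, sum_add_distrib, sum_const, card_univ,
      Fintype.card_fin, smul_eq_mul, mul_one]
    ring

lemma S_zero_left (l : ℕ) : S 0 l = 1 := by
  simp [S, filter_singleton, monotone_const]

lemma S_zero_right (ω : ℕ) : S ω 0 = 1 := by
  simp [S, Subsingleton.monotone]

lemma zeta_zero_left (η k : ℕ) : zeta η 0 k = (1 / 2 : ℝ) ^ (k * η) := by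
  simp [zeta, S_zero_left]

lemma zeta_succ_succ {η ω k : ℕ} (hη : ω + 1 ≤ η) (hk : ω + 1 ≤ k) :
    zeta η (ω + 1) (k + 1) = (1 / 2 : ℝ) ^ (η - (ω + 1)) * zeta η (ω + 1) k
      + (1 - (1 / 2 : ℝ) ^ (η - ω)) * zeta η ω k := by
  obtain ⟨l, rfl⟩ := Nat.exists_eq_add_of_le hk
  obtain ⟨e, rfl⟩ := Nat.exists_eq_add_of_le hη
  have hl : ω + 1 + l + 1 - (ω + 1) = l + 1 := by omega
  have hl' : ω + 1 + l - ω = l + 1 := by omega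
  have he : ω + 1 + e - ω = e + 1 := by omega
  have he' : ω + 1 + e + 1 - (ω + 1) = e + 1 := by omega
  simp only [zeta, hl, hl', he, he', Nat.add_sub_cancel_left, S_succ_succ,
    prod_Icc_succ_top (Nat.le_add_left 1 ω)]
  ring

lemma zeta_succ_self (η k : ℕ) :
    zeta η (k + 1) (k + 1) = (1 - (1 / 2 : ℝ) ^ (η - k)) * zeta η k k := by
  simp only [zeta, Nat.sub_self, S_zero_right, prod_Icc_succ_top (Nat.le_add_left 1 k),
    Nat.add_sub_add_right]
  ring

/-- `zeta η ω k` with the value `0` for `ω > k`, where the formula defining `zeta` does not vanish. -/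
noncomputable def zetaTrunc (η ω k : ℕ) : ℝ := if ω ≤ k then zeta η ω k else 0

lemma sum_range_zetaTrunc (η k : ℕ) :
    ∑ ω ∈ range (η + 1), zetaTrunc η ω k = ∑ ω ∈ range (min η k + 1), zeta η ω k := by
  simp only [zetaTrunc]
  rw [← sum_filter]
  congr 1
  ext ω
  simp only [mem_filter, mem_range]
  omega

lemma zetaTrunc_zero_succ (η k : ℕ) :
    zetaTrunc η 0 (k + 1) = (1 / 2 : ℝ) ^ η * zetaTrunc η 0 k := by
  simp only [zetaTrunc, zero_le, if_true, zeta_zero_left, ← pow_add]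
  ring_nf

lemma zetaTrunc_succ_succ {η ω : ℕ} (k : ℕ) (hη : ω + 1 ≤ η) :
    zetaTrunc η (ω + 1) (k + 1) = (1 / 2 : ℝ) ^ (η - (ω + 1)) * zetaTrunc η (ω + 1) k
      + (1 - (1 / 2 : ℝ) ^ (η - ω)) * zetaTrunc η ω k := by
  rcases lt_trichotomy ω k with hlt | rfl | hgt
  · have hle : ω + 1 ≤ k := hlt
    simp only [zetaTrunc, hle, hlt.le, Nat.add_le_add_iff_right, if_true]
    exact zeta_succ_succ hη hlt
  · simp [zetaTrunc, zeta_succ_self]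
  · simp [zetaTrunc, not_le.2 hgt, not_le.2 (Nat.lt_succ_of_lt hgt)]

/-- For fixed `η` and `k`, the values `ζ(η,ω,k)`, `0 ≤ ω ≤ min{η,k}`, sum to `1`. -/
theorem stmt_15 (η k : ℕ) :
    ∑ ω ∈ Finset.range (min η k + 1), zeta η ω k = 1 := by
  induction k with
  | zero => simp [zeta, S_zero_right]
  | succ k ih =>
    rw [← sum_range_zetaTrunc] at ih ⊢
    rw [← ih]
    exact sum_range_eq_of_pure_birth_step (a := fun ω => (1 / 2 : ℝ) ^ (η - ω))
      (by simpa using zetaTrunc_zero_succ η k) (fun ω hω => zetaTrunc_succ_succ k hω) (by simp)
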